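/- arXiv:quant-ph/0208028 — 3 statements merged into one kernel-verified Lean document; each statement's English description precedes it below -/
import Mathlib

section
/- Let B be an unextendible product basis in H = H₁ ⊗ H₂ (i.e., no nonzero product vector is orthogonal to every element of B) and let μ₀ = Σ_k p_k |φ_k⟩⟨φ_k| with all p_k > 0, Σ p_k = 1. Then inf{Tr(μ₀ σ) : σ separable density} > 0. -/
open Matrix
open scoped ComplexOrder

/-- The rank-one projection `|φ⟩⟨φ|`. -/
def outer {n : Type*} [Fintype n] (φ : n → ℂ) : Matrix n n ℂ :=
  Matrix.vecMulVec φ (star φ)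

/-- The set of separable densities on `ℂ^{d₁} ⊗ ℂ^{d₂}`: the convex hull of the
projections onto product unit vectors. -/
def SepSet (d₁ d₂ : ℕ) : Set (Matrix (Fin d₁ × Fin d₂) (Fin d₁ × Fin d₂) ℂ) :=
  convexHull ℝ {M | ∃ (a : Fin d₁ → ℂ) (b : Fin d₂ → ℂ),
    star a ⬝ᵥ a = 1 ∧ star b ⬝ᵥ b = 1 ∧ M = outer (fun p => a p.1 * b p.2)}

lemma trace_outer_mul_outer {n : Type*} [Fintype n] (u v : n → ℂ) :
    Matrix.trace (outer u * outer v) = (star u ⬝ᵥ v) * (star v ⬝ᵥ u) := by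
  simp only [outer, Matrix.trace, Matrix.diag_apply, Matrix.mul_apply,
    Matrix.vecMulVec_apply, dotProduct, Pi.star_apply, Finset.mul_sum, Finset.sum_mul]
  refine Finset.sum_congr rfl fun i _ => Finset.sum_congr rfl fun j _ => ?_
  ring

lemma star_dot_conj {n : Type*} [Fintype n] (u v : n → ℂ) :
    star v ⬝ᵥ u = starRingEnd ℂ (star u ⬝ᵥ v) := by
  simp only [dotProduct, map_sum, Pi.star_apply]
  refine Finset.sum_congr rfl fun i _ => ?_
  simp [RCLike.star_def, mul_comm]

lemma re_trace_outer_mul_outer {n : Type*} [Fintype n] (u v : n → ℂ) :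
    (Matrix.trace (outer u * outer v)).re = Complex.normSq (star u ⬝ᵥ v) := by
  rw [trace_outer_mul_outer, star_dot_conj u v, Complex.mul_conj]
  simp

lemma prod_dot {d₁ d₂ : Type*} [Fintype d₁] [Fintype d₂] (a c : d₁ → ℂ) (b d : d₂ → ℂ) :
    (star (fun p : d₁ × d₂ => a p.1 * b p.2) ⬝ᵥ fun p => c p.1 * d p.2)
      = (star a ⬝ᵥ c) * (star b ⬝ᵥ d) := by
  simp only [dotProduct, Pi.star_apply, Fintype.sum_prod_type, Finset.sum_mul_sum]
  refine Finset.sum_congr rfl fun i _ => Finset.sum_congr rfl fun j _ => ?_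
  simp [star_mul']; ring

lemma dot_self_eq {n : Type*} [Fintype n] (a : n → ℂ) :
    star a ⬝ᵥ a = ((∑ i, Complex.normSq (a i) : ℝ) : ℂ) := by
  push_cast
  simp only [dotProduct, Pi.star_apply]
  refine Finset.sum_congr rfl fun i _ => ?_
  rw [Complex.normSq_eq_conj_mul_self]
  simp [RCLike.star_def]

lemma sphere_compact {n : Type*} [Fintype n] :
    IsCompact {a : n → ℂ | star a ⬝ᵥ a = 1} := by
  apply Metric.isCompact_of_isClosed_isBounded
  · have hc : Continuous fun a : n → ℂ => star a ⬝ᵥ a := by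
      unfold dotProduct
      fun_prop
    exact isClosed_eq hc continuous_const
  · rw [Metric.isBounded_iff_subset_closedBall 0]
    refine ⟨1, fun a ha => ?_⟩
    simp only [Metric.mem_closedBall, dist_zero_right]
    have h1 : ∑ i, Complex.normSq (a i) = 1 := by
      have := ha.out
      rw [dot_self_eq] at this
      exact_mod_cast this
    rw [pi_norm_le_iff_of_nonneg zero_le_one]
    intro i
    have hle : Complex.normSq (a i) ≤ 1 := by
      rw [← h1]
      exact Finset.single_le_sum (fun j _ => Complex.normSq_nonneg _) (Finset.mem_univ i)
    have : ‖a i‖ ^ 2 ≤ 1 := by rwa [← Complex.sq_norm] at hle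
    nlinarith [norm_nonneg (a i)]


/-- If `B = {|φ_k⟩}` is an unextendible product basis in `H₁ ⊗ H₂` (no nonzero product
vector is orthogonal to every element of `B`) and `μ₀ = ∑ p_k |φ_k⟩⟨φ_k|` with all
`p_k > 0`, `∑ p_k = 1`, then `inf {Tr(μ₀ σ) : σ separable density} > 0`. -/
theorem stmt4 {d₁ d₂ m : ℕ}
    (α : Fin m → Fin d₁ → ℂ) (β : Fin m → Fin d₂ → ℂ)
    (φ : Fin m → Fin d₁ × Fin d₂ → ℂ)
    (hprod : ∀ k, φ k = fun p => α k p.1 * β k p.2)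
    (hunit : ∀ k, star (φ k) ⬝ᵥ φ k = 1)
    (hUPB : ∀ (a : Fin d₁ → ℂ) (b : Fin d₂ → ℂ),
      (∀ k, star (fun p : Fin d₁ × Fin d₂ => a p.1 * b p.2) ⬝ᵥ φ k = 0) →
      (fun p : Fin d₁ × Fin d₂ => a p.1 * b p.2) = 0)
    (p : Fin m → ℝ) (hp : ∀ k, 0 < p k) (hpsum : ∑ k, p k = 1)
    (μ₀ : Matrix (Fin d₁ × Fin d₂) (Fin d₁ × Fin d₂) ℂ)
    (hμ₀ : μ₀ = ∑ k, (p k : ℂ) • outer (φ k)) :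
    ∃ ε > 0, ∀ σ ∈ SepSet d₁ d₂, ε ≤ (Matrix.trace (μ₀ * σ)).re := by
  classical
  set S : Set (Matrix (Fin d₁ × Fin d₂) (Fin d₁ × Fin d₂) ℂ) :=
    {M | ∃ (a : Fin d₁ → ℂ) (b : Fin d₂ → ℂ),
      star a ⬝ᵥ a = 1 ∧ star b ⬝ᵥ b = 1 ∧ M = outer (fun p => a p.1 * b p.2)} with hSdef
  -- the objective function on pairs (a,b)
  set g : ((Fin d₁ → ℂ) × (Fin d₂ → ℂ)) → ℝ := fun ab =>
    ∑ k, p k * Complex.normSq (star (φ k) ⬝ᵥ fun q => ab.1 q.1 * ab.2 q.2) with hgdef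
  have hgc : Continuous g := by
    apply continuous_finset_sum
    intro k _
    apply Continuous.mul continuous_const
    apply Complex.continuous_normSq.comp
    unfold dotProduct
    fun_prop
  -- g is positive on the product of spheres
  have hgpos : ∀ a b, star a ⬝ᵥ a = 1 → star b ⬝ᵥ b = 1 → 0 < g (a, b) := by
    intro a b ha hb
    have hvne : (fun q : Fin d₁ × Fin d₂ => a q.1 * b q.2) ≠ 0 := by
      intro h0
      have := prod_dot a a b b
      rw [ha, hb, h0] at this
      simp at this
    obtain ⟨k, hk⟩ : ∃ k, star (fun q : Fin d₁ × Fin d₂ => a q.1 * b q.2) ⬝ᵥ φ k ≠ 0 := by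
      by_contra hcon
      push_neg at hcon
      exact hvne (hUPB a b hcon)
    apply Finset.sum_pos' (fun j _ => mul_nonneg (hp j).le (Complex.normSq_nonneg _))
    refine ⟨k, Finset.mem_univ k, mul_pos (hp k) ?_⟩
    rw [Complex.normSq_pos]
    rw [star_dot_conj]
    simpa using hk
  -- key trace computation for generators
  have htr : ∀ (a : Fin d₁ → ℂ) (b : Fin d₂ → ℂ),
      (Matrix.trace (μ₀ * outer (fun q : Fin d₁ × Fin d₂ => a q.1 * b q.2))).re = g (a, b) := by
    intro a b
    rw [hμ₀, Finset.sum_mul]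
    simp only [Matrix.smul_mul, Matrix.trace_sum, Matrix.trace_smul, Complex.re_sum]
    refine Finset.sum_congr rfl fun k _ => ?_
    rw [smul_eq_mul, Complex.mul_re]
    simp [re_trace_outer_mul_outer]
  by_cases hS : S.Nonempty
  · obtain ⟨M₀, a₀, b₀, ha₀, hb₀, _⟩ := hS
    have hKcpt : IsCompact ({a : Fin d₁ → ℂ | star a ⬝ᵥ a = 1} ×ˢ
        {b : Fin d₂ → ℂ | star b ⬝ᵥ b = 1}) := sphere_compact.prod sphere_compact
    obtain ⟨x, hxK, hmin⟩ := hKcpt.exists_isMinOn ⟨(a₀, b₀), ⟨ha₀, hb₀⟩⟩ hgc.continuousOn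
    obtain ⟨hx1, hx2⟩ := hxK
    refine ⟨g x, hgpos x.1 x.2 hx1 hx2, ?_⟩
    intro σ hσ
    have hsub : S ⊆ {σ | g x ≤ (Matrix.trace (μ₀ * σ)).re} := by
      rintro M ⟨a, b, ha, hb, rfl⟩
      have := hmin (Set.mk_mem_prod ha hb)
      simpa [htr a b] using this
    have hconv : Convex ℝ {σ | g x ≤ (Matrix.trace (μ₀ * σ)).re} := by
      intro σ₁ h₁ σ₂ h₂ s t hs ht hst
      simp only [Set.mem_setOf_eq] at h₁ h₂ ⊢
      rw [Matrix.mul_add, Matrix.mul_smul, Matrix.mul_smul, Matrix.trace_add,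
        Matrix.trace_smul, Matrix.trace_smul, Complex.add_re, Complex.real_smul,
        Complex.real_smul, Complex.mul_re, Complex.mul_re]
      simp only [Complex.ofReal_re, Complex.ofReal_im, zero_mul, sub_zero]
      have k1 := mul_le_mul_of_nonneg_left h₁ hs
      have k2 := mul_le_mul_of_nonneg_left h₂ ht
      have k3 : s * g x + t * g x = g x := by rw [← add_mul, hst, one_mul]
      linarith
    exact convexHull_min hsub hconv hσ
  · refine ⟨1, one_pos, ?_⟩
    intro σ hσ
    rw [Set.not_nonempty_iff_eq_empty] at hS
    rw [SepSet] at hσ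
    rw [show {M | ∃ (a : Fin d₁ → ℂ) (b : Fin d₂ → ℂ),
      star a ⬝ᵥ a = 1 ∧ star b ⬝ᵥ b = 1 ∧ M = outer (fun p => a p.1 * b p.2)} = S from rfl,
      hS, convexHull_empty] at hσ
    exact absurd hσ (Set.notMem_empty σ)
end

section
/- Let {μ_k} be projections onto m orthonormal product vectors forming an orthogonal UPB, p a probability vector, μ(p) = Σ p_k μ_k, b = 1/max_k p_k, and ρ(p) = (1/(N−b))(I − b μ(p)) with b < N. Then ρ(p) is a density matrix with nontrivial null space (hence on the boundary of D), and if p_max < 1/m + (ε/m)·(N−m)/(m−Nε), where ε/m = inf{Tr(μ₀σ) : σ separable} and μ₀ = (1/m)Σμ_k, then Tr(μ₀ρ(p)) < ε/m and hence ρ(p) is inseparable. -/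
open Matrix
open scoped ComplexOrder

/-!
Every `φ k` is an eigenvector of `ρ(p)` with eigenvalue `(1 - b p_k)/(N - b)`, which vanishes at
`k = kmax`, and `ρ(p)` is a positive multiple of `(I - P) + ∑ₖ (1 - b pₖ) μₖ`, where
`P = ∑ₖ μₖ` is an orthogonal projection and `b pₖ ≤ 1`; so `ρ(p)` is a density. Since
`Tr(μₖ ρ(p))` is the eigenvalue at `φ k`, `Tr(μ₀ ρ(p)) = (m - b)/(m (N - b))`, and the bound on
`p_max = 1/b` is exactly `(m - b)/(N - b) < ε`. Separable states are positive semidefinite, so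
`Tr(μ₀ σ) ≥ 0` on `SepSet` and its infimum `ε/m` is a lower bound there, which `ρ(p)` violates.
-/

section Outer

variable {n : Type*} [Fintype n]

lemma outer_mulVec (u x : n → ℂ) : outer u *ᵥ x = (star u ⬝ᵥ x) • u := by
  rw [outer, vecMulVec_mulVec, op_smul_eq_smul]

lemma trace_outer (u : n → ℂ) : trace (outer u) = star u ⬝ᵥ u := by
  rw [outer, trace_vecMulVec, dotProduct_comm]

lemma trace_outer_mul (u : n → ℂ) (M : Matrix n n ℂ) :
    trace (outer u * M) = star u ⬝ᵥ (M *ᵥ u) := by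
  rw [outer, vecMulVec_mul, trace_vecMulVec, dotProduct_comm, dotProduct_mulVec]

lemma posSemidef_outer (u : n → ℂ) : (outer u).PosSemidef :=
  posSemidef_vecMulVec_self_star u

lemma outer_mul_outer (u v : n → ℂ) :
    outer u * outer v = (star u ⬝ᵥ v) • vecMulVec u (star v) := by
  rw [outer, outer, vecMulVec_mul_vecMulVec, vecMulVec_smul]

end Outer

lemma posSemidef_of_mem_SepSet {d₁ d₂ : ℕ} {σ : Matrix (Fin d₁ × Fin d₂) (Fin d₁ × Fin d₂) ℂ}
    (hσ : σ ∈ SepSet d₁ d₂) : σ.PosSemidef := by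
  refine convexHull_min (t := {M | M.PosSemidef}) ?_ ?_ hσ
  · rintro _ ⟨a, b, -, -, rfl⟩
    exact posSemidef_outer _
  · intro A hA B hB s t hs ht _
    exact (PosSemidef.smul hA hs).add (PosSemidef.smul hB ht)

lemma re_trace_smul_sum_outer_mul_nonneg {n ι : Type*} [Fintype n] [Fintype ι]
    (φ : ι → n → ℂ) {c : ℝ} (hc : 0 ≤ c) {σ : Matrix n n ℂ} (hσ : σ.PosSemidef) :
    0 ≤ (trace (((c : ℂ) • ∑ k, outer (φ k)) * σ)).re := by
  simp only [smul_mul, trace_smul, Finset.sum_mul, trace_sum, trace_outer_mul, smul_eq_mul,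
    Complex.re_ofReal_mul, Complex.re_sum]
  exact mul_nonneg hc <| Finset.sum_nonneg fun k _ =>
    (Complex.nonneg_iff.mp (hσ.dotProduct_mulVec_nonneg (φ k))).1

section Orthonormal

variable {n ι : Type*} [Fintype n] [Fintype ι] [DecidableEq ι] {φ : ι → n → ℂ}

lemma sum_smul_outer_mulVec (horth : ∀ k l, star (φ k) ⬝ᵥ φ l = if k = l then 1 else 0)
    (w : ι → ℂ) (j : ι) : (∑ k, w k • outer (φ k)) *ᵥ φ j = w j • φ j := by
  simp [sum_mulVec, smul_mulVec, outer_mulVec, horth]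

lemma smul_one_sub_sum_smul_outer_mulVec [DecidableEq n]
    (horth : ∀ k l, star (φ k) ⬝ᵥ φ l = if k = l then 1 else 0) (c : ℝ) (w : ι → ℝ) (j : ι) :
    ((c : ℂ) • (1 - ∑ k, (w k : ℂ) • outer (φ k))) *ᵥ φ j = ((c * (1 - w j) : ℝ) : ℂ) • φ j := by
  rw [smul_mulVec, sub_mulVec, one_mulVec, sum_smul_outer_mulVec horth]
  push_cast
  module

lemma sum_outer_mul_self (horth : ∀ k l, star (φ k) ⬝ᵥ φ l = if k = l then 1 else 0) :
    (∑ k, outer (φ k)) * (∑ k, outer (φ k)) = ∑ k, outer (φ k) := by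
  simp only [Finset.sum_mul, Finset.mul_sum, outer_mul_outer, horth, ite_smul, one_smul,
    zero_smul, Finset.sum_ite_eq', Finset.mem_univ, if_true]
  rfl

lemma posSemidef_one_sub_sum_outer [DecidableEq n]
    (horth : ∀ k l, star (φ k) ⬝ᵥ φ l = if k = l then 1 else 0) :
    (1 - ∑ k, outer (φ k)).PosSemidef := by
  set P := ∑ k, outer (φ k)
  have hP : P.IsHermitian := (posSemidef_sum _ fun k _ => posSemidef_outer (φ k)).isHermitian
  have hsq : 1 - P = (1 - P)ᴴ * (1 - P) := by
    rw [conjTranspose_sub, conjTranspose_one, hP.eq, sub_mul, mul_sub, mul_sub,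
      sum_outer_mul_self horth]
    simp only [one_mul, mul_one]
    abel
  rw [hsq]
  exact posSemidef_conjTranspose_mul_self _

lemma posSemidef_one_sub_sum_smul_outer [DecidableEq n]
    (horth : ∀ k l, star (φ k) ⬝ᵥ φ l = if k = l then 1 else 0) {w : ι → ℝ} (hw : ∀ k, w k ≤ 1) :
    (1 - ∑ k, (w k : ℂ) • outer (φ k)).PosSemidef := by
  have hsplit : 1 - ∑ k, (w k : ℂ) • outer (φ k) =
      (1 - ∑ k, outer (φ k)) + ∑ k, (1 - w k) • outer (φ k) := by
    simp only [sub_smul, one_smul, Finset.sum_sub_distrib, Complex.coe_smul]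
    abel
  rw [hsplit]
  exact (posSemidef_one_sub_sum_outer horth).add <|
    posSemidef_sum _ fun k _ => (posSemidef_outer (φ k)).smul (sub_nonneg.mpr (hw k))

lemma trace_one_sub_sum_smul_outer [DecidableEq n]
    (horth : ∀ k l, star (φ k) ⬝ᵥ φ l = if k = l then 1 else 0) (w : ι → ℝ) :
    trace (1 - ∑ k, (w k : ℂ) • outer (φ k)) = ((Fintype.card n - ∑ k, w k : ℝ) : ℂ) := by
  simp [trace_sum, trace_outer, horth]

lemma re_trace_smul_sum_outer_mul (horth : ∀ k l, star (φ k) ⬝ᵥ φ l = if k = l then 1 else 0)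
    (c : ℝ) {M : Matrix n n ℂ} {e : ι → ℝ} (hM : ∀ k, M *ᵥ φ k = (e k : ℂ) • φ k) :
    (trace (((c : ℂ) • ∑ k, outer (φ k)) * M)).re = c * ∑ k, e k := by
  simp [Finset.sum_mul, trace_sum, trace_outer_mul, hM, horth]

end Orthonormal

lemma pos_of_sum_eq_one_of_forall_le {ι : Type*} [Fintype ι] {p : ι → ℝ}
    (hsum : ∑ k, p k = 1) {k₀ : ι} (hk₀ : ∀ k, p k ≤ p k₀) : 0 < p k₀ := by
  by_contra! h
  have := Finset.sum_le_sum fun k (_ : k ∈ Finset.univ) => (hk₀ k).trans h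
  norm_num [hsum] at this

lemma inv_le_card_of_sum_eq_one {ι : Type*} [Fintype ι] {p : ι → ℝ} (hsum : ∑ k, p k = 1)
    {k₀ : ι} (hk₀ : ∀ k, p k ≤ p k₀) : (p k₀)⁻¹ ≤ Fintype.card ι := by
  rw [inv_le_iff_one_le_mul₀ (pos_of_sum_eq_one_of_forall_le hsum hk₀)]
  simpa [hsum] using Finset.sum_le_card_nsmul Finset.univ p (p k₀) fun k _ => hk₀ k

lemma sub_div_sub_lt_of_inv_lt {m N ε b : ℝ} (hm : 0 < m) (hmε : N * ε < m) (hb : 0 < b)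
    (hbN : b < N) (hbound : b⁻¹ < 1 / m + ε / m * ((N - m) / (m - N * ε))) :
    (m - b) / (N - b) < ε := by
  have hmε' : 0 < m - N * ε := sub_pos.mpr hmε
  have hrhs : 1 / m + ε / m * ((N - m) / (m - N * ε)) = (1 - ε) / (m - N * ε) := by
    rw [div_mul_div_comm, div_add_div _ _ hm.ne' (by positivity),
      div_eq_div_iff (by positivity) hmε'.ne']
    ring
  rw [hrhs, inv_lt_iff_one_lt_mul₀ hb, div_mul_eq_mul_div, one_lt_div hmε'] at hbound
  rw [div_lt_iff₀ (sub_pos.mpr hbN)]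
  linarith
theorem stmt9_general {d₁ d₂ m N : ℕ} (hN : N = d₁ * d₂) (hm : m < N) (hm0 : 0 < m)
    (φ : Fin m → Fin d₁ × Fin d₂ → ℂ)
    (horth : ∀ k l, star (φ k) ⬝ᵥ φ l = if k = l then 1 else 0)
    (μ₀ : Matrix (Fin d₁ × Fin d₂) (Fin d₁ × Fin d₂) ℂ)
    (hμ₀ : μ₀ = (m : ℂ)⁻¹ • ∑ k, outer (φ k))
    (ε : ℝ)
    (hε : ε / m = sInf ((fun σ => (Matrix.trace (μ₀ * σ)).re) '' SepSet d₁ d₂))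
    (hεsmall : N * ε / m < 1)
    (p : Fin m → ℝ) (hpsum : ∑ k, p k = 1)
    (kmax : Fin m) (hkmax : ∀ k, p k ≤ p kmax)
    (μp : Matrix (Fin d₁ × Fin d₂) (Fin d₁ × Fin d₂) ℂ)
    (hμp : μp = ∑ k, (p k : ℂ) • outer (φ k))
    (b : ℝ) (hb : b = (p kmax)⁻¹)
    (ρp : Matrix (Fin d₁ × Fin d₂) (Fin d₁ × Fin d₂) ℂ)
    (hρp : ρp = ((N : ℂ) - (b : ℂ))⁻¹ • (1 - (b : ℂ) • μp)) :
    ρp.PosSemidef ∧ ρp.trace = 1 ∧ ρp.mulVec (φ kmax) = 0 ∧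
      (p kmax < 1 / m + (ε / m) * ((N - m) / (m - N * ε)) →
        (Matrix.trace (μ₀ * ρp)).re < ε / m ∧ ρp ∉ SepSet d₁ d₂) := by
  have hm0' : (0 : ℝ) < m := Nat.cast_pos.mpr hm0
  have hpmax : 0 < p kmax := pos_of_sum_eq_one_of_forall_le hpsum hkmax
  have hb0 : 0 < b := hb ▸ inv_pos.mpr hpmax
  have hbmax : b * p kmax = 1 := hb ▸ inv_mul_cancel₀ hpmax.ne'
  have hbN : b < N := by
    have hbm : b ≤ m := by simpa [hb] using inv_le_card_of_sum_eq_one hpsum hkmax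
    exact hbm.trans_lt (Nat.cast_lt.mpr hm)
  have hρ : ρp = (((N - b)⁻¹ : ℝ) : ℂ) • (1 - ∑ k, ((b * p k : ℝ) : ℂ) • outer (φ k)) := by
    simp only [hρp, hμp, Finset.smul_sum, smul_smul, Complex.ofReal_mul, Complex.ofReal_inv,
      Complex.ofReal_sub, Complex.ofReal_natCast]
  have heig : ∀ k, ρp *ᵥ φ k = (((N - b)⁻¹ * (1 - b * p k) : ℝ) : ℂ) • φ k :=
    hρ ▸ smul_one_sub_sum_smul_outer_mulVec horth _ _
  have hμ₀' : μ₀ = (((m : ℝ)⁻¹ : ℝ) : ℂ) • ∑ k, outer (φ k) := by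
    rw [hμ₀, Complex.ofReal_inv, Complex.ofReal_natCast]
  have hsum : ∑ k, (N - b)⁻¹ * (1 - b * p k) = (m - b) / (N - b) := by
    rw [← Finset.mul_sum, Finset.sum_sub_distrib, ← Finset.mul_sum, hpsum]
    simp only [Finset.sum_const, Finset.card_univ, Fintype.card_fin, nsmul_eq_mul, mul_one]
    ring
  have hlt : p kmax < 1 / m + (ε / m) * ((N - m) / (m - N * ε)) →
      (trace (μ₀ * ρp)).re < ε / m := fun hbound => by
    rw [hμ₀', re_trace_smul_sum_outer_mul horth _ heig, hsum, inv_mul_eq_div]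
    refine div_lt_div_of_pos_right (sub_div_sub_lt_of_inv_lt hm0' ?_ hb0 hbN
      (by rwa [hb, inv_inv])) hm0'
    exact (div_lt_one hm0').mp hεsmall
  have hbdd : BddBelow ((fun σ => (trace (μ₀ * σ)).re) '' SepSet d₁ d₂) :=
    ⟨0, Set.forall_mem_image.mpr fun σ hσ => hμ₀' ▸
      re_trace_smul_sum_outer_mul_nonneg φ (inv_nonneg.mpr hm0'.le) (posSemidef_of_mem_SepSet hσ)⟩
  refine ⟨?_, ?_, ?_, fun hbound => ⟨hlt hbound, fun hsep =>
    notMem_of_lt_csInf (hε ▸ hlt hbound) hbdd ⟨ρp, hsep, rfl⟩⟩⟩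
  · rw [hρ]
    refine (posSemidef_one_sub_sum_smul_outer horth fun k => ?_).smul ?_
    · exact hbmax ▸ mul_le_mul_of_nonneg_left (hkmax k) hb0.le
    · exact Complex.zero_le_real.mpr (inv_nonneg.mpr (sub_pos.mpr hbN).le)
  · rw [hρ, trace_smul, trace_one_sub_sum_smul_outer horth, ← Finset.mul_sum, hpsum, mul_one,
      smul_eq_mul, ← Complex.ofReal_mul, Fintype.card_prod, Fintype.card_fin, Fintype.card_fin,
      ← hN, inv_mul_cancel₀ (sub_pos.mpr hbN).ne', Complex.ofReal_one]
  · rw [heig, hbmax, sub_self, mul_zero, Complex.ofReal_zero, zero_smul]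

/-- Far-face construction from an orthogonal UPB: with `μ(p) = ∑ p_k μ_k`,
`b = 1/p_max` and `ρ(p) = (1/(N-b))(I - b μ(p))`, the matrix `ρ(p)` is a density with
`|φ_max⟩` in its null space (hence `ρ(p)` lies on the boundary of `D`), and if
`p_max < 1/m + (ε/m)(N-m)/(m-Nε)`, where `ε/m = inf {Tr(μ₀σ) : σ ∈ S}`,
then `Tr(μ₀ ρ(p)) < ε/m` and `ρ(p)` is inseparable. -/
theorem stmt9 {d₁ d₂ m N : ℕ} (hN : N = d₁ * d₂) (hm : m < N) (hm0 : 0 < m)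
    (α : Fin m → Fin d₁ → ℂ) (β : Fin m → Fin d₂ → ℂ)
    (φ : Fin m → Fin d₁ × Fin d₂ → ℂ)
    (hprod : ∀ k, φ k = fun p => α k p.1 * β k p.2)
    (horth : ∀ k l, star (φ k) ⬝ᵥ φ l = if k = l then 1 else 0)
    (hUPB : ∀ (a : Fin d₁ → ℂ) (b : Fin d₂ → ℂ),
      (∀ k, star (fun p : Fin d₁ × Fin d₂ => a p.1 * b p.2) ⬝ᵥ φ k = 0) →
      (fun p : Fin d₁ × Fin d₂ => a p.1 * b p.2) = 0)
    (μ₀ : Matrix (Fin d₁ × Fin d₂) (Fin d₁ × Fin d₂) ℂ)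
    (hμ₀ : μ₀ = (m : ℂ)⁻¹ • ∑ k, outer (φ k))
    (ε : ℝ)
    (hε : ε / m = sInf ((fun σ => (Matrix.trace (μ₀ * σ)).re) '' SepSet d₁ d₂))
    (hεpos : 0 < ε) (hεsmall : N * ε / m < 1)
    (p : Fin m → ℝ) (hp : ∀ k, 0 ≤ p k) (hpsum : ∑ k, p k = 1)
    (kmax : Fin m) (hkmax : ∀ k, p k ≤ p kmax)
    (μp : Matrix (Fin d₁ × Fin d₂) (Fin d₁ × Fin d₂) ℂ)
    (hμp : μp = ∑ k, (p k : ℂ) • outer (φ k))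
    (b : ℝ) (hb : b = (p kmax)⁻¹)
    (ρp : Matrix (Fin d₁ × Fin d₂) (Fin d₁ × Fin d₂) ℂ)
    (hρp : ρp = ((N : ℂ) - (b : ℂ))⁻¹ • (1 - (b : ℂ) • μp)) :
    ρp.PosSemidef ∧ ρp.trace = 1 ∧ ρp.mulVec (φ kmax) = 0 ∧
      (p kmax < 1 / m + (ε / m) * ((N - m) / (m - N * ε)) →
        (Matrix.trace (μ₀ * ρp)).re < ε / m ∧ ρp ∉ SepSet d₁ d₂) :=
  stmt9_general hN hm hm0 φ horth μ₀ hμ₀ ε hε hεsmall p hpsum kmax hkmax μp hμp b hb ρp hρp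
end

section
/- Let H = C^d ⊗ C^d and let B = {|α_n⟩ ⊗ |β_n⟩ : 1 ≤ n ≤ 2d−1} be product vectors such that every d-element subset of {|α_n⟩} is a basis of C^d and every d-element subset of {|β_n⟩} is a basis of C^d. Then no nonzero product vector |α⟩ ⊗ |β⟩ is orthogonal to all elements of B. -/
open Matrix

lemma stmt11_aux {d : ℕ} (hd : 0 < d) (a : Fin d → ℂ) {ι : Type*} [Fintype ι]
    (v : ι → Fin d → ℂ) (hv : LinearIndependent ℂ v) (hcard : Fintype.card ι = d)
    (h : ∀ i, star a ⬝ᵥ v i = 0) : a = 0 := by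
  have : Nonempty ι := Fintype.card_pos_iff.mp (by omega)
  have hspan : Submodule.span ℂ (Set.range v) = ⊤ := by
    apply hv.span_eq_top_of_card_eq_finrank
    simp [hcard]
  let f : (Fin d → ℂ) →ₗ[ℂ] ℂ :=
    { toFun := fun x => star a ⬝ᵥ x
      map_add' := fun x y => by simp [dotProduct_add]
      map_smul' := fun c x => by simp [dotProduct_smul] }
  have hker : Submodule.span ℂ (Set.range v) ≤ LinearMap.ker f := by
    rw [Submodule.span_le]
    rintro x ⟨i, rfl⟩
    simpa [f] using h i
  have hf : ∀ x, f x = 0 := by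
    intro x
    have : x ∈ LinearMap.ker f := hker (hspan ▸ Submodule.mem_top)
    exact this
  funext j
  have := hf (Pi.single j 1)
  simp only [f, LinearMap.coe_mk, AddHom.coe_mk, dotProduct_single, mul_one,
    Pi.star_apply] at this
  simpa using congrArg star this

/-- Let `B = {|α_n⟩ ⊗ |β_n⟩ : 1 ≤ n ≤ 2d-1}` be product vectors in `ℂ^d ⊗ ℂ^d` such that
every `d`-element subset of the `|α_n⟩` and of the `|β_n⟩` is a basis of `ℂ^d`. Then no
nonzero product vector `|α⟩ ⊗ |β⟩` is orthogonal to all elements of `B`. -/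
theorem stmt11 {d : ℕ} (hd : 0 < d)
    (α β : Fin (2 * d - 1) → Fin d → ℂ)
    (hα : ∀ s : Finset (Fin (2 * d - 1)), s.card = d →
      LinearIndependent ℂ (fun i : s => α i))
    (hβ : ∀ s : Finset (Fin (2 * d - 1)), s.card = d →
      LinearIndependent ℂ (fun i : s => β i)) :
    ∀ a b : Fin d → ℂ,
      (∀ n, (star a ⬝ᵥ α n) * (star b ⬝ᵥ β n) = 0) → a = 0 ∨ b = 0 := by
  intro a b hab
  classical
  set S : Finset (Fin (2 * d - 1)) := Finset.univ.filter (fun n => star a ⬝ᵥ α n = 0) with hS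
  set T : Finset (Fin (2 * d - 1)) := Finset.univ.filter (fun n => star b ⬝ᵥ β n = 0) with hT
  have hcover : (Finset.univ : Finset (Fin (2 * d - 1))) ⊆ S ∪ T := by
    intro n _
    rcases mul_eq_zero.mp (hab n) with h | h
    · exact Finset.mem_union_left _ (Finset.mem_filter.mpr ⟨Finset.mem_univ _, h⟩)
    · exact Finset.mem_union_right _ (Finset.mem_filter.mpr ⟨Finset.mem_univ _, h⟩)
  have hcards : 2 * d - 1 ≤ S.card + T.card := by
    calc 2 * d - 1 = (Finset.univ : Finset (Fin (2 * d - 1))).card := by simp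
    _ ≤ (S ∪ T).card := Finset.card_le_card hcover
    _ ≤ S.card + T.card := Finset.card_union_le _ _
  have hbig : d ≤ S.card ∨ d ≤ T.card := by omega
  rcases hbig with hbig | hbig
  · left
    obtain ⟨s, hsS, hsc⟩ := Finset.exists_subset_card_eq hbig
    have hli := hα s hsc
    refine stmt11_aux hd a (fun i : s => α i) hli (by simp [hsc]) ?_
    rintro ⟨i, hi⟩
    exact (Finset.mem_filter.mp (hsS hi)).2
  · right
    obtain ⟨s, hsT, hsc⟩ := Finset.exists_subset_card_eq hbig
    have hli := hβ s hsc
    refine stmt11_aux hd b (fun i : s => β i) hli (by simp [hsc]) ?_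
    rintro ⟨i, hi⟩
    exact (Finset.mem_filter.mp (hsT hi)).2
end
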